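/- arXiv:0804.0741 — 7 statements merged into one kernel-verified Lean document; each statement's English description precedes it below -/
import Mathlib

section
/- Let (Ω, F, P) be a probability space and x, y nonnegative bounded random variables with y bounded below by a positive constant. Then the supremum over all nonnegative random variables p with E[p] = 1 of the ratio E[p·x]/E[p·y] equals esssup(x/y). -/
open MeasureTheory
open scoped ENNReal

/-!
Pointwise `x ≤ essSup (x / y) * y` almost everywhere, so every ratio `E[p x] / E[p y]` is at most
`essSup (x / y)`. Conversely, for `t < essSup (x / y)` the set `A = {t < x / y}` has positive
measure, and the density `p = 1_A / P(A)` gives a ratio `∫_A x / ∫_A y ≥ t`.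
-/

namespace MeasureTheory

variable {Ω : Type*} [MeasurableSpace Ω] {μ : Measure Ω}

theorem measure_lt_ne_zero_of_lt_essSup {β : Type*} [CompleteLinearOrder β] {f : Ω → β} {t : β}
    (ht : t < essSup f μ) : μ {ω | t < f ω} ≠ 0 := by
  intro h0
  have hle : ∀ᵐ ω ∂μ, f ω ≤ t := by
    simpa only [ae_iff, not_le] using h0
  exact (essSup_le_of_ae_le t hle).not_gt ht

theorem lintegral_mul_le_essSup_div_mul {p x y : Ω → ℝ≥0∞} (hp : AEMeasurable p μ)
    (hy : AEMeasurable y μ) (hy0 : ∀ᵐ ω ∂μ, y ω ≠ 0) (hytop : ∀ᵐ ω ∂μ, y ω ≠ ∞) :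
    ∫⁻ ω, p ω * x ω ∂μ ≤ essSup (fun ω => x ω / y ω) μ * ∫⁻ ω, p ω * y ω ∂μ := by
  rw [← lintegral_const_mul'' (f := fun ω => p ω * y ω) _ (hp.mul hy)]
  refine lintegral_mono_ae ?_
  filter_upwards [ae_le_essSup (f := fun ω => x ω / y ω) (μ := μ), hy0, hytop]
    with ω hle h0 htop
  calc p ω * x ω = p ω * (x ω / y ω * y ω) := by rw [ENNReal.div_mul_cancel h0 htop]
    _ ≤ p ω * (essSup (fun ω => x ω / y ω) μ * y ω) := by gcongr
    _ = essSup (fun ω => x ω / y ω) μ * (p ω * y ω) := by ring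

theorem lintegral_indicator_const_mul {A : Set Ω} (hA : MeasurableSet A) {r : ℝ≥0∞} (hr : r ≠ ∞)
    (f : Ω → ℝ≥0∞) : ∫⁻ ω, A.indicator (fun _ => r) ω * f ω ∂μ = r * ∫⁻ ω in A, f ω ∂μ := by
  simp_rw [← Set.indicator_mul_left]
  rw [lintegral_indicator hA, lintegral_const_mul' r _ hr]

theorem setLIntegral_div_le_iSup_lintegral_mul_div {A : Set Ω} (hA : MeasurableSet A)
    (hA0 : μ A ≠ 0) (hAtop : μ A ≠ ∞) (x y : Ω → ℝ≥0∞) :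
    (∫⁻ ω in A, x ω ∂μ) / (∫⁻ ω in A, y ω ∂μ) ≤
      ⨆ p ∈ {p : Ω → ℝ≥0∞ | Measurable p ∧ ∫⁻ ω, p ω ∂μ = 1},
        (∫⁻ ω, p ω * x ω ∂μ) / (∫⁻ ω, p ω * y ω ∂μ) := by
  have hinv : (μ A)⁻¹ ≠ ∞ := ENNReal.inv_ne_top.2 hA0
  have hp1 : ∫⁻ ω, A.indicator (fun _ => (μ A)⁻¹) ω ∂μ = 1 := by
    rw [lintegral_indicator_const hA, ENNReal.inv_mul_cancel hA0 hAtop]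
  refine le_trans (le_of_eq ?_) (le_biSup _ ⟨measurable_const.indicator hA, hp1⟩)
  rw [lintegral_indicator_const_mul hA hinv, lintegral_indicator_const_mul hA hinv,
    ENNReal.mul_div_mul_left _ _ (ENNReal.inv_ne_zero.2 hAtop) hinv]

theorem le_setLIntegral_div_of_le_div {A : Set Ω} (hA : MeasurableSet A) {x y : Ω → ℝ≥0∞}
    {t : ℝ≥0∞} (hxy : ∀ ω ∈ A, t ≤ x ω / y ω) (hy0 : ∫⁻ ω in A, y ω ∂μ ≠ 0)
    (hytop : ∫⁻ ω in A, y ω ∂μ ≠ ∞) :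
    t ≤ (∫⁻ ω in A, x ω ∂μ) / (∫⁻ ω in A, y ω ∂μ) := by
  rw [ENNReal.le_div_iff_mul_le (Or.inl hy0) (Or.inl hytop)]
  calc t * ∫⁻ ω in A, y ω ∂μ ≤ ∫⁻ ω in A, t * y ω ∂μ := lintegral_const_mul_le t y
    _ ≤ ∫⁻ ω in A, x ω ∂μ :=
      setLIntegral_mono' hA fun ω hω => ENNReal.mul_le_of_le_div (hxy ω hω)

end MeasureTheory

theorem stmt3_general {Ω : Type*} [MeasurableSpace Ω] (μ : Measure Ω) [IsProbabilityMeasure μ]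
    (x y : Ω → ℝ≥0∞) (hx : Measurable x) (hy : Measurable y)
    (c C : ℝ≥0∞) (hc : 0 < c) (hC : C < ∞)
    (hyC : ∀ᵐ ω ∂μ, y ω ≤ C)
    (hyc : ∀ᵐ ω ∂μ, c ≤ y ω) :
    (⨆ p ∈ {p : Ω → ℝ≥0∞ | Measurable p ∧ ∫⁻ ω, p ω ∂μ = 1},
      (∫⁻ ω, p ω * x ω ∂μ) / (∫⁻ ω, p ω * y ω ∂μ))
      = essSup (fun ω => x ω / y ω) μ := by
  have hy0 : ∀ᵐ ω ∂μ, y ω ≠ 0 := hyc.mono fun ω h => (hc.trans_le h).ne'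
  have hytop : ∀ᵐ ω ∂μ, y ω ≠ ∞ := hyC.mono fun ω h => (h.trans_lt hC).ne
  refine le_antisymm (iSup₂_le fun p hp => ENNReal.div_le_of_le_mul <|
    lintegral_mul_le_essSup_div_mul hp.1.aemeasurable hy.aemeasurable hy0 hytop) ?_
  refine le_of_forall_lt_imp_le_of_dense fun t ht => ?_
  set A := {ω | t < x ω / y ω}
  have hA : MeasurableSet A := measurableSet_lt measurable_const (hx.div hy)
  have hA0 : μ A ≠ 0 := measure_lt_ne_zero_of_lt_essSup ht
  have hyA_ge : c * μ A ≤ ∫⁻ ω in A, y ω ∂μ := by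
    rw [← setLIntegral_const]
    exact lintegral_mono_ae (ae_restrict_of_ae hyc)
  have hyA_le : ∫⁻ ω in A, y ω ∂μ ≤ C * μ A := by
    rw [← setLIntegral_const]
    exact lintegral_mono_ae (ae_restrict_of_ae hyC)
  have hyA0 : ∫⁻ ω in A, y ω ∂μ ≠ 0 := ((ENNReal.mul_pos hc.ne' hA0).trans_le hyA_ge).ne'
  have hyAtop : ∫⁻ ω in A, y ω ∂μ ≠ ∞ :=
    (hyA_le.trans_lt (ENNReal.mul_lt_top hC (measure_lt_top μ A))).ne
  exact (le_setLIntegral_div_of_le_div hA (fun _ hω => le_of_lt hω) hyA0 hyAtop).trans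
    (setLIntegral_div_le_iSup_lintegral_mul_div hA hA0 (measure_ne_top μ A) x y)

/-- Lemma 1, eq. (3.5): for bounded nonnegative random variables `x, y` with `y`
bounded below by a positive constant, the supremum over all nonnegative random
variables `p` with `E[p] = 1` of the ratio `E[p·x]/E[p·y]` equals the essential
supremum of `x/y`. -/
theorem stmt3 {Ω : Type*} [MeasurableSpace Ω] (μ : Measure Ω) [IsProbabilityMeasure μ]
    (x y : Ω → ℝ≥0∞) (hx : Measurable x) (hy : Measurable y)
    (c C : ℝ≥0∞) (hc : 0 < c) (hC : C < ∞)
    (hxC : ∀ᵐ ω ∂μ, x ω ≤ C) (hyC : ∀ᵐ ω ∂μ, y ω ≤ C)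
    (hyc : ∀ᵐ ω ∂μ, c ≤ y ω) :
    (⨆ p ∈ {p : Ω → ℝ≥0∞ | Measurable p ∧ ∫⁻ ω, p ω ∂μ = 1},
      (∫⁻ ω, p ω * x ω ∂μ) / (∫⁻ ω, p ω * y ω ∂μ))
      = essSup (fun ω => x ω / y ω) μ :=
  stmt3_general μ x y hx hy c C hc hC hyC hyc
end

section
/- Let a ≠ 0, b ≠ 0, λ > 0, ν ≥ 0, r = (−a + √(a² + 2λb²))/b², and A = (b²/(2a))(a r/λ − 1). Define f : (−∞, ν] → ℝ by f(y) = (1/a)[−y + ν + A(e^{−2ya/b²} − e^{−2νa/b²})] for 0 ≤ y ≤ ν, and f(y) = (1/a)[ν + A(1 − e^{−2νa/b²})] + (1/λ)(1 − e^{ry}) for y < 0. Then f satisfies the delay differential equation a f'(y) + 0.5 b² f''(y) + λ (f(y⁺) − f(y)) = −1 for all y ≤ ν, where y⁺ = max(y, 0), and f(ν) = 0. -/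
/-!
On each side of `0` the function has the form `p + q y + s e^{k y}`. For `y < 0` the exponent is
`k = r`, a root of `b² k² / 2 + a k = λ`, which is exactly what makes
`a f' + b² f'' / 2 = λ (f y - f 0) - 1` there; for `y ≥ 0` it is `k = -2a/b²`, a root of
`b² k² / 2 + a k = 0`, and the jump term vanishes. The constants (in particular `A`) are chosen so
that the two pieces agree to second order at `0`, so `f` is twice differentiable there and the
one-sided computations glue.
-/

open Set

noncomputable def affineAddExp (p q s k y : ℝ) : ℝ := p + q * y + s * Real.exp (k * y)

@[simp]
lemma affineAddExp_zero (p q s k : ℝ) : affineAddExp p q s k 0 = p + s := by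
  simp [affineAddExp]

lemma hasDerivAt_affineAddExp (p q s k y : ℝ) :
    HasDerivAt (affineAddExp p q s k) (affineAddExp q 0 (s * k) k y) y := by
  have hexp : HasDerivAt (fun x => Real.exp (k * x)) (Real.exp (k * y) * k) y := by
    simpa using ((hasDerivAt_id y).const_mul k).exp
  unfold affineAddExp
  exact ((((hasDerivAt_id' y).const_mul q).const_add p).add (hexp.const_mul s)).congr_deriv
    (by ring)

lemma hasDerivAt_ite_lt {L R l r : ℝ → ℝ} {c : ℝ}
    (hL : ∀ x, HasDerivAt L (l x) x) (hR : ∀ x, HasDerivAt R (r x) x)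
    (h0 : L c = R c) (h1 : l c = r c) (y : ℝ) :
    HasDerivAt (fun x => if x < c then L x else R x) (if y < c then l y else r y) y := by
  rcases lt_trichotomy y c with hy | rfl | hy
  · rw [if_pos hy]
    exact (hL y).congr_of_eventuallyEq ((eventually_lt_nhds hy).mono fun x hx => if_pos hx)
  · rw [if_neg (lt_irrefl y)]
    have hle : HasDerivWithinAt (fun x => if x < y then L x else R x) (r y) (Iic y) y := by
      refine (h1 ▸ (hL y).hasDerivWithinAt).congr (fun x hx => ?_)
        (if_neg (lt_irrefl y) ▸ h0.symm)
      rcases (mem_Iic.1 hx).lt_or_eq with hx | rfl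
      · exact if_pos hx
      · exact (if_neg (lt_irrefl x)).trans h0.symm
    have hge : HasDerivWithinAt (fun x => if x < y then L x else R x) (r y) (Ici y) y :=
      (hR y).hasDerivWithinAt.congr (fun x hx => if_neg (not_lt.2 hx)) (if_neg (lt_irrefl y))
    simpa only [Iic_union_Ici, hasDerivWithinAt_univ] using hle.union hge
  · rw [if_neg (not_lt.2 hy.le)]
    exact (hR y).congr_of_eventuallyEq
      ((eventually_gt_nhds hy).mono fun x hx => if_neg (not_lt.2 hx.le))

lemma delay_ode_of_eq_ite_affineAddExp {a b lam pL sL r pR q sR k : ℝ} {f : ℝ → ℝ}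
    (hr : b ^ 2 * r ^ 2 / 2 + a * r = lam) (hk : a * k + b ^ 2 * k ^ 2 / 2 = 0)
    (hq : a * q = -1) (hsL : lam * sL = -1)
    (h0 : pL + sL = pR + sR) (h1 : sL * r = q + sR * k) (h2 : sL * r * r = sR * k * k)
    (hf : ∀ y, f y = if y < 0 then affineAddExp pL 0 sL r y else affineAddExp pR q sR k y)
    (y : ℝ) :
    a * deriv f y + 0.5 * b ^ 2 * deriv (deriv f) y + lam * (f (max y 0) - f y) = -1 := by
  obtain rfl := funext hf
  have hf' : deriv (fun x => if x < 0 then affineAddExp pL 0 sL r x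
      else affineAddExp pR q sR k x) = fun x => if x < 0 then affineAddExp 0 0 (sL * r) r x
      else affineAddExp q 0 (sR * k) k x :=
    funext fun x => (hasDerivAt_ite_lt (c := 0) (hasDerivAt_affineAddExp pL 0 sL r)
      (hasDerivAt_affineAddExp pR q sR k) (by simpa using h0) (by simpa using h1) x).deriv
  have hf'' := (hasDerivAt_ite_lt (c := 0) (hasDerivAt_affineAddExp 0 0 (sL * r) r)
    (hasDerivAt_affineAddExp q 0 (sR * k) k) (by simpa using h1) (by simpa using h2) y).deriv
  rw [hf', hf'']
  rcases lt_or_ge y 0 with hy | hy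
  · simp only [hy, if_true, max_eq_right hy.le, lt_irrefl, if_false, affineAddExp, mul_zero,
      Real.exp_zero]
    linear_combination (sL * Real.exp (r * y)) * hr + hsL - lam * h0
  · simp only [not_lt.2 hy, if_false, max_eq_left hy, affineAddExp]
    linear_combination hq + (sR * Real.exp (k * y)) * hk

lemma half_mul_sq_add_mul_eq_of_eq_root {a b lam r : ℝ} (hb : b ≠ 0)
    (hd : 0 ≤ a ^ 2 + 2 * lam * b ^ 2)
    (hr : r = (-a + √(a ^ 2 + 2 * lam * b ^ 2)) / b ^ 2) :
    b ^ 2 * r ^ 2 / 2 + a * r = lam := by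
  have hs := Real.sq_sqrt hd
  generalize √(a ^ 2 + 2 * lam * b ^ 2) = s at hs hr
  subst hr
  field_simp
  linear_combination hs

/-- Theorem 1 (verification step): the function `f` of eq. (4.5) satisfies the
delay differential equation `a f'(y) + 0.5 b² f''(y) + λ (f(y⁺) − f(y)) = −1`
for all `y ≤ ν` (with `y⁺ = max(y,0)`), together with the boundary condition
`f(ν) = 0`. -/
theorem stmt8 (a b lam ν : ℝ) (ha : a ≠ 0) (hb : b ≠ 0) (hlam : 0 < lam) (hν : 0 ≤ ν)
    (r A : ℝ)
    (hr : r = (-a + Real.sqrt (a ^ 2 + 2 * lam * b ^ 2)) / b ^ 2)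
    (hA : A = (b ^ 2 / (2 * a)) * (a * r / lam - 1))
    (f : ℝ → ℝ)
    (hf : ∀ y, f y =
      if y < 0 then
        (1 / a) * (ν + A * (1 - Real.exp (-2 * ν * a / b ^ 2)))
          + (1 / lam) * (1 - Real.exp (r * y))
      else
        (1 / a) * (-y + ν + A * (Real.exp (-2 * y * a / b ^ 2)
          - Real.exp (-2 * ν * a / b ^ 2)))) :
    (∀ y ≤ ν,
      a * deriv f y + 0.5 * b ^ 2 * deriv (deriv f) y + lam * (f (max y 0) - f y) = -1)
    ∧ f ν = 0 := by
  have hroot := half_mul_sq_add_mul_eq_of_eq_root hb (by positivity) hr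
  set E := Real.exp (-2 * ν * a / b ^ 2)
  refine ⟨fun y _ => delay_ode_of_eq_ite_affineAddExp (pL := (ν + A * (1 - E)) / a + 1 / lam)
    (sL := -1 / lam) (pR := (ν - A * E) / a) (q := -1 / a) (sR := A / a) (k := -2 * a / b ^ 2)
    hroot ?_ ?_ ?_ ?_ ?_ ?_ (fun x => ?_) y, ?_⟩
  · field_simp; ring
  · field_simp
  · field_simp
  · ring
  · subst hA; field_simp; ring
  · subst hA; field_simp; linear_combination (-2) * hroot
  · rw [hf x]
    split_ifs
    · simp only [affineAddExp]; ring
    · simp only [affineAddExp]; rw [show -2 * a / b ^ 2 * x = -2 * x * a / b ^ 2 by ring]; ring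
  · rw [hf ν, if_neg (not_lt.2 hν)]
    ring
end

section
/- With the function f of the previous context (a ≠ 0, b ≠ 0, λ > 0, ν ≥ 0, r and A as defined), f is twice continuously differentiable on (−∞, ν], i.e., the two piecewise formulas and their first and second derivatives match at y = 0. -/
/-!
Both branches of `f` have the shape `α + β y + γ exp (κ y)`, a family closed under
differentiation, so it suffices to match the values, slopes and curvatures of the two
branches at `0`. The values match by construction and the slopes by the choice of `A`; the
curvatures match because `r` is the positive root of `b² r² + 2 a r - 2 λ = 0`.
-/

open Set Real

theorem continuous_if_lt_of_eq {α E : Type*} [TopologicalSpace α] [LinearOrder α]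
    [OrderClosedTopology α] [TopologicalSpace E] {p q : α → E} {c : α}
    (hp : Continuous p) (hq : Continuous q) (h : p c = q c) :
    Continuous fun y => if y < c then p y else q y := by
  simpa only [← not_le, ite_not, id] using
    hq.if_le hp continuous_const continuous_id fun x hx => by
      rw [← show c = x from hx]; exact h.symm

section Gluing

variable {E : Type*} [NormedAddCommGroup E] [NormedSpace ℝ E] {p q : ℝ → E} {c : ℝ}

theorem hasDerivAt_if_lt_of_deriv_eq (hp : Differentiable ℝ p) (hq : Differentiable ℝ q)
    (h₀ : p c = q c) (h₁ : deriv p c = deriv q c) (y : ℝ) :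
    HasDerivAt (fun y => if y < c then p y else q y)
      (if y < c then deriv p y else deriv q y) y := by
  rcases lt_trichotomy y c with hy | rfl | hy
  · rw [if_pos hy]
    refine (hp y).hasDerivAt.congr_of_eventuallyEq ?_
    filter_upwards [Iio_mem_nhds hy] with t ht
    exact if_pos ht
  · have hleft : HasDerivWithinAt (fun t => if t < y then p t else q t) (deriv q y) (Iic y) y := by
      refine h₁ ▸ (hp y).hasDerivAt.hasDerivWithinAt.congr_of_mem (fun t ht => ?_)
        (mem_Iic.2 le_rfl)
      rcases (mem_Iic.1 ht).lt_or_eq with ht | rfl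
      · rw [if_pos ht]
      · rw [if_neg (lt_irrefl t), h₀]
    have hright : HasDerivWithinAt (fun t => if t < y then p t else q t) (deriv q y) (Ici y) y :=
      (hq y).hasDerivAt.hasDerivWithinAt.congr_of_mem
        (fun t ht => if_neg (not_lt.2 (mem_Ici.1 ht))) (mem_Ici.2 le_rfl)
    rw [if_neg (lt_irrefl y), ← hasDerivWithinAt_univ, ← Iic_union_Ici]
    exact hleft.union hright
  · rw [if_neg (not_lt.2 hy.le)]
    refine (hq y).hasDerivAt.congr_of_eventuallyEq ?_
    filter_upwards [Ioi_mem_nhds hy] with t ht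
    exact if_neg (not_lt.2 (le_of_lt ht))

theorem contDiff_if_lt_of_iteratedDeriv_eq {n : ℕ} (hp : ContDiff ℝ n p) (hq : ContDiff ℝ n q)
    (h : ∀ k ≤ n, iteratedDeriv k p c = iteratedDeriv k q c) :
    ContDiff ℝ n fun y => if y < c then p y else q y := by
  induction n generalizing p q with
  | zero =>
    simpa [contDiff_zero] using
      continuous_if_lt_of_eq hp.continuous hq.continuous (by simpa using h 0 le_rfl)
  | succ n ih =>
    push_cast at hp hq ⊢
    obtain ⟨hp_diff, -, hp'⟩ := contDiff_succ_iff_deriv.1 hp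
    obtain ⟨hq_diff, -, hq'⟩ := contDiff_succ_iff_deriv.1 hq
    have hderiv (y : ℝ) := hasDerivAt_if_lt_of_deriv_eq hp_diff hq_diff
      (by simpa using h 0 (by omega)) (by simpa using h 1 (by omega)) y
    refine contDiff_succ_iff_deriv.2 ⟨fun y => (hderiv y).differentiableAt, by simp, ?_⟩
    rw [funext fun y => (hderiv y).deriv]
    exact ih hp' hq' fun k hk => by simpa only [iteratedDeriv_succ'] using h (k + 1) (by omega)

end Gluing

section ExpAffine

noncomputable def expAffine (α β γ κ : ℝ) (y : ℝ) : ℝ := α + β * y + γ * exp (κ * y)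

variable (α β γ κ : ℝ)

theorem contDiff_expAffine {n : WithTop ℕ∞} : ContDiff ℝ n (expAffine α β γ κ) := by
  unfold expAffine
  fun_prop

theorem hasDerivAt_expAffine (y : ℝ) :
    HasDerivAt (expAffine α β γ κ) (expAffine β 0 (γ * κ) κ y) y := by
  have h : HasDerivAt (expAffine α β γ κ) (β * 1 + γ * (exp (κ * y) * (κ * 1))) y :=
    (((hasDerivAt_id' y).const_mul β).const_add α).fun_add
      (((hasDerivAt_id' y).const_mul κ).exp.const_mul γ)
  convert h using 1
  simp only [expAffine]
  ring

theorem deriv_expAffine : deriv (expAffine α β γ κ) = expAffine β 0 (γ * κ) κ :=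
  funext fun y => (hasDerivAt_expAffine α β γ κ y).deriv

theorem expAffine_zero : expAffine α β γ κ 0 = α + γ := by
  simp [expAffine]

end ExpAffine

theorem stmt9_general (a b lam ν : ℝ) (ha : a ≠ 0) (hb : b ≠ 0) (hlam : 0 < lam)
    (r A : ℝ)
    (hr : r = (-a + Real.sqrt (a ^ 2 + 2 * lam * b ^ 2)) / b ^ 2)
    (hA : A = (b ^ 2 / (2 * a)) * (a * r / lam - 1))
    (f : ℝ → ℝ)
    (hf : ∀ y, f y =
      if y < 0 then
        (1 / a) * (ν + A * (1 - Real.exp (-2 * ν * a / b ^ 2)))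
          + (1 / lam) * (1 - Real.exp (r * y))
      else
        (1 / a) * (-y + ν + A * (Real.exp (-2 * y * a / b ^ 2)
          - Real.exp (-2 * ν * a / b ^ 2)))) :
    ContDiffOn ℝ 2 f (Set.Iic ν) := by
  have hb2 : b ^ 2 ≠ 0 := by positivity
  have hroot : b ^ 2 * (r * r) + 2 * a * r + -(2 * lam) = 0 := by
    have hD : 0 ≤ a ^ 2 + 2 * lam * b ^ 2 := by positivity
    refine (quadratic_eq_zero_iff hb2 (s := 2 * √(a ^ 2 + 2 * lam * b ^ 2)) ?_ r).2 (.inl ?_)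
    · rw [discrim, mul_mul_mul_comm, Real.mul_self_sqrt hD]; ring
    · rw [hr]; field_simp
  set e := exp (-2 * ν * a / b ^ 2)
  have hf_eq : f = fun y => if y < 0
      then expAffine ((1 / a) * (ν + A * (1 - e)) + 1 / lam) 0 (-(1 / lam)) r y
      else expAffine ((1 / a) * (ν - A * e)) (-(1 / a)) (A / a) (-2 * a / b ^ 2) y := by
    funext y
    rw [hf, expAffine, expAffine, show -2 * a / b ^ 2 * y = -2 * y * a / b ^ 2 by ring]
    split_ifs <;> ring
  rw [hf_eq]
  refine (contDiff_if_lt_of_iteratedDeriv_eq (contDiff_expAffine ..) (contDiff_expAffine ..)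
    fun k hk => ?_).contDiffOn
  interval_cases k <;>
    simp only [iteratedDeriv_zero, iteratedDeriv_succ', deriv_expAffine,
      expAffine_zero] <;> subst hA <;> field_simp
  · ring
  · ring
  · linear_combination -hroot

/-- Remark 1: the function `f` of eq. (4.5) is twice continuously differentiable
on `(−∞, ν]`; the two piecewise formulas and their first and second derivatives
match at `y = 0`. -/
theorem stmt9 (a b lam ν : ℝ) (ha : a ≠ 0) (hb : b ≠ 0) (hlam : 0 < lam) (hν : 0 ≤ ν)
    (r A : ℝ)
    (hr : r = (-a + Real.sqrt (a ^ 2 + 2 * lam * b ^ 2)) / b ^ 2)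
    (hA : A = (b ^ 2 / (2 * a)) * (a * r / lam - 1))
    (f : ℝ → ℝ)
    (hf : ∀ y, f y =
      if y < 0 then
        (1 / a) * (ν + A * (1 - Real.exp (-2 * ν * a / b ^ 2)))
          + (1 / lam) * (1 - Real.exp (r * y))
      else
        (1 / a) * (-y + ν + A * (Real.exp (-2 * y * a / b ^ 2)
          - Real.exp (-2 * ν * a / b ^ 2)))) :
    ContDiffOn ℝ 2 f (Set.Iic ν) :=
  stmt9_general a b lam ν ha hb hlam r A hr hA f hf
end

section
/- Let a > 0, b ≠ 0, λ > 0, ν ≥ 0 and f as above. Then f is strictly decreasing on (−∞, ν] and is uniformly bounded there, with 0 ≤ f(y) ≤ f(0) + 1/λ for all y ≤ ν. -/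
/-!
The exponent `r` is the positive root of `b² r² / 2 + a r = λ`, so `0 < a r < λ`, which is exactly
`-1 < A · (2a/b²) < 0`. On `[0, ν]`, `f` is `(φ y - φ ν) / a` with `φ y = -y + A e^{-2ay/b²}`; the
exponential term increases with slope at most `|A| · 2a/b² < 1`, so `φ` strictly decreases. On
`(-∞, 0]`, `f` is `f 0` plus the decreasing function `(1 - e^{ry}) / λ`, which takes values in
`[0, 1/λ)`. Gluing the two pieces at `0` gives strict decrease on `(-∞, ν]`, and the bounds follow
from `f ν = 0` and monotonicity.
-/

open Real Set

lemma quadratic_root_eq {a b lam r : ℝ} (hb : b ≠ 0) (hD : 0 ≤ a ^ 2 + 2 * lam * b ^ 2)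
    (hr : r = (-a + √(a ^ 2 + 2 * lam * b ^ 2)) / b ^ 2) :
    b ^ 2 * r ^ 2 / 2 + a * r = lam := by
  have hsq := sq_sqrt hD
  generalize √(a ^ 2 + 2 * lam * b ^ 2) = s at hr hsq
  subst hr
  field_simp
  linear_combination hsq

lemma quadratic_root_pos_and_mul_lt {a b lam r : ℝ} (hb : b ≠ 0) (hlam : 0 < lam)
    (hr : r = (-a + √(a ^ 2 + 2 * lam * b ^ 2)) / b ^ 2) :
    0 < r ∧ a * r < lam := by
  have hb2 : 0 < b ^ 2 := by positivity
  have ha_lt : a < √(a ^ 2 + 2 * lam * b ^ 2) :=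
    (le_abs_self a).trans_lt <| by
      rw [← sqrt_sq_eq_abs]
      exact sqrt_lt_sqrt (sq_nonneg a) (by nlinarith)
  have hr0 : 0 < r := by rw [hr]; exact div_pos (by linarith) hb2
  refine ⟨hr0, ?_⟩
  have := quadratic_root_eq hb (by positivity) hr
  nlinarith [mul_pos hb2 (pow_pos hr0 2)]

lemma neg_one_lt_mul_and_nonpos_of_root {a b lam r A : ℝ} (ha : 0 < a) (hb : b ≠ 0)
    (hlam : 0 < lam) (hr : r = (-a + √(a ^ 2 + 2 * lam * b ^ 2)) / b ^ 2)
    (hA : A = (b ^ 2 / (2 * a)) * (a * r / lam - 1)) :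
    -1 < A * (2 * a / b ^ 2) ∧ A ≤ 0 := by
  obtain ⟨hr0, har⟩ := quadratic_root_pos_and_mul_lt hb hlam hr
  have hAc : A * (2 * a / b ^ 2) = a * r / lam - 1 := by rw [hA]; field_simp
  refine ⟨by rw [hAc]; linarith [show 0 < a * r / lam by positivity], ?_⟩
  refine nonpos_of_mul_nonpos_left ?_ (show 0 < 2 * a / b ^ 2 by positivity)
  rw [hAc]; linarith [(div_lt_one hlam).mpr har]

lemma strictAntiOn_neg_add_mul_exp {A c : ℝ} (hc : 0 ≤ c) (hA : A ≤ 0) (hAc : -1 < A * c) :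
    StrictAntiOn (fun y => -y + A * exp (-(c * y))) (Ici 0) := by
  intro x hx y _ hxy
  have hsplit : exp (-(c * y)) = exp (-(c * x)) * exp (-(c * (y - x))) := by
    rw [← exp_add]; ring_nf
  -- `1 - e^{-t} ≤ t` bounds the increment of the exponential term by `-A c (y - x) < y - x`.
  have htangent : 1 - c * (y - x) ≤ exp (-(c * (y - x))) := by
    linarith [add_one_le_exp (-(c * (y - x)))]
  have hex_le : exp (-(c * x)) ≤ 1 := exp_le_one_iff.mpr (by nlinarith [mem_Ici.mp hx])
  have hex_pos : 0 < exp (-(c * x)) := exp_pos _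
  have hincr : A * (exp (-(c * y)) - exp (-(c * x))) ≤ -(A * c) * (y - x) := by
    rw [hsplit]
    have h1 : 0 ≤ -A * exp (-(c * x)) := mul_nonneg (neg_nonneg.mpr hA) hex_pos.le
    have h2 := mul_le_mul_of_nonneg_left htangent h1
    nlinarith [mul_nonneg (mul_nonneg (neg_nonneg.mpr hA) hc) (sub_nonneg.mpr hxy.le)]
  show -y + A * exp (-(c * y)) < -x + A * exp (-(c * x))
  nlinarith

lemma strictAnti_add_mul_one_sub_exp (C : ℝ) {lam r : ℝ} (hlam : 0 < lam) (hr : 0 < r) :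
    StrictAnti (fun y => C + (1 / lam) * (1 - exp (r * y))) := fun x y hxy => by
  have : exp (r * x) < exp (r * y) := exp_lt_exp.mpr (mul_lt_mul_of_pos_left hxy hr)
  show C + 1 / lam * (1 - exp (r * y)) < C + 1 / lam * (1 - exp (r * x))
  gcongr

/-- For `a > 0` the function `f` of eq. (4.5) is strictly decreasing on
`(−∞, ν]` and uniformly bounded there, with `0 ≤ f(y) ≤ f(0) + 1/λ` for all
`y ≤ ν`. -/
theorem stmt10 (a b lam ν : ℝ) (ha : 0 < a) (hb : b ≠ 0) (hlam : 0 < lam) (hν : 0 ≤ ν)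
    (r A : ℝ)
    (hr : r = (-a + Real.sqrt (a ^ 2 + 2 * lam * b ^ 2)) / b ^ 2)
    (hA : A = (b ^ 2 / (2 * a)) * (a * r / lam - 1))
    (f : ℝ → ℝ)
    (hf : ∀ y, f y =
      if y < 0 then
        (1 / a) * (ν + A * (1 - Real.exp (-2 * ν * a / b ^ 2)))
          + (1 / lam) * (1 - Real.exp (r * y))
      else
        (1 / a) * (-y + ν + A * (Real.exp (-2 * y * a / b ^ 2)
          - Real.exp (-2 * ν * a / b ^ 2)))) :
    StrictAntiOn f (Set.Iic ν) ∧ ∀ y ≤ ν, 0 ≤ f y ∧ f y ≤ f 0 + 1 / lam := by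
  have hr0 := (quadratic_root_pos_and_mul_lt hb hlam hr).1
  obtain ⟨hAc_gt, hA_nonpos⟩ := neg_one_lt_mul_and_nonpos_of_root ha hb hlam hr hA
  set c := 2 * a / b ^ 2 with hc_def
  have hc : 0 < c := by positivity
  set φ : ℝ → ℝ := fun y => -y + A * exp (-(c * y))
  have hf_upper : ∀ y, 0 ≤ y → f y = (1 / a) * (φ y - φ ν) := fun y hy => by
    rw [hf, if_neg hy.not_gt]
    simp only [φ, hc_def]
    ring_nf
  have hf_lower : ∀ y ≤ 0, f y = f 0 + (1 / lam) * (1 - exp (r * y)) := fun y hy => by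
    rcases hy.lt_or_eq with hy | rfl
    · rw [hf, if_pos hy, hf_upper 0 le_rfl]
      simp only [φ, hc_def, mul_zero, neg_zero, exp_zero]
      ring_nf
    · simp
  have hanti_lower : StrictAntiOn f (Iic 0) := fun x hx y hy hxy => by
    rw [hf_lower x hx, hf_lower y hy]
    exact strictAnti_add_mul_one_sub_exp (f 0) hlam hr0 hxy
  have hanti_upper : StrictAntiOn f (Icc 0 ν) := fun x hx y hy hxy => by
    rw [hf_upper x hx.1, hf_upper y hy.1]
    have := strictAntiOn_neg_add_mul_exp hc.le hA_nonpos hAc_gt hx.1 hy.1 hxy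
    gcongr
  have hanti : StrictAntiOn f (Iic ν) := by
    rw [← Iic_union_Icc_eq_Iic hν]
    exact hanti_lower.union hanti_upper isGreatest_Iic (isLeast_Icc hν)
  refine ⟨hanti, fun y hy => ⟨?_, ?_⟩⟩
  · calc 0 = f ν := by simp [hf_upper ν hν]
      _ ≤ f y := hanti.antitoneOn hy (mem_Iic.mpr le_rfl) hy
  · rcases le_total y 0 with hy0 | hy0
    · rw [hf_lower y hy0]
      gcongr
      exact mul_le_of_le_one_right (by positivity) (by linarith [exp_pos (r * y)])
    · calc f y ≤ f 0 := hanti.antitoneOn (mem_Iic.mpr hν) hy hy0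
        _ ≤ f 0 + 1 / lam := le_add_of_nonneg_right (by positivity)
end

section
/- Let g_{ν⋆}(0) = (2/μ²){(ν⋆ − 1 + e^{−ν⋆}) + (1/r_∞)(1 − e^{−ν⋆})} and h_{ν⋆}(0) = (2/μ²){(e^{ν⋆} − ν⋆ − 1) + (1/r₀)(e^{ν⋆} − 1)} with r₀ r_∞ = 2λ/μ², r_∞ = r₀ + 1, r₀ > 0, ν⋆ ≥ 0. Then the functions g_{ν⋆} and h_{ν⋆} defined piecewise as in the paper satisfy the identity e^y g'_{ν⋆}(y) = (r₀/r_∞) h'_{ν⋆}(y) for all y ∈ (−∞, ν⋆] (with one-sided derivatives at 0 and at ν⋆). -/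
/-!
Since `r_∞ = r₀ + 1` and `r₀ r_∞ = 2λ/μ²`, the constants simplify to `A₀ = -r₀/r_∞` and
`A_∞ = r_∞/r₀`. With these values the one-sided derivatives of both piecewise functions agree
at `0`, so `g` and `h` are differentiable everywhere, and on either side of `0` the identity
`e^y g'(y) = (r₀/r_∞) h'(y)` is a direct computation (for `y < 0` it is `e^y e^{r₀ y} = e^{r_∞ y}`).
-/

open Real Set

theorem hasDerivAt_ite_lt_s13 {F G F' G' : ℝ → ℝ} {a : ℝ} (hF : ∀ x, HasDerivAt F (F' x) x)
    (hG : ∀ x, HasDerivAt G (G' x) x) (hval : F a = G a) (hder : F' a = G' a) (x : ℝ) :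
    HasDerivAt (fun y => if y < a then F y else G y) (if x < a then F' x else G' x) x := by
  rcases lt_trichotomy x a with hx | rfl | hx
  · rw [if_pos hx]
    refine (hF x).congr_of_eventuallyEq ?_
    filter_upwards [Iio_mem_nhds hx] with y hy
    rw [if_pos (mem_Iio.mp hy)]
  · rw [if_neg (lt_irrefl x)]
    have hleft : HasDerivWithinAt (fun y => if y < x then F y else G y) (G' x) (Iic x) x := by
      refine hder ▸ (hF x).hasDerivWithinAt.congr (fun y hy => ?_) (by simp [hval])
      rcases (mem_Iic.mp hy).lt_or_eq with hy | rfl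
      · simp [hy]
      · simp [hval]
    have hright : HasDerivWithinAt (fun y => if y < x then F y else G y) (G' x) (Ici x) x :=
      (hG x).hasDerivWithinAt.congr (fun y hy => by simp [not_lt.mpr (mem_Ici.mp hy)]) (by simp)
    simpa [Iic_union_Ici] using hleft.union hright
  · rw [if_neg hx.not_gt]
    refine (hG x).congr_of_eventuallyEq ?_
    filter_upwards [Ioi_mem_nhds hx] with y hy
    rw [if_neg (not_lt.mpr hy.le)]

theorem neg_half_add_sqrt_pos_and_mul_add_one {c r : ℝ} (hc : 0 < c)
    (hr : r = -1 / 2 + √(1 / 4 + c)) : 0 < r ∧ r * (r + 1) = c := by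
  have hsq : √(1 / 4 + c) ^ 2 = 1 / 4 + c := sq_sqrt (by positivity)
  subst hr
  exact ⟨by nlinarith [sqrt_nonneg (1 / 4 + c)], by linear_combination hsq⟩

theorem hasDerivAt_const_add_mul_one_sub_exp_mul (c b r x : ℝ) :
    HasDerivAt (fun y => c + b * (1 - exp (r * y))) (-(b * r) * exp (r * x)) x :=
  (((((hasDerivAt_id' x).const_mul r).exp.const_sub 1).const_mul b).const_add c).congr_deriv
    (by ring)

theorem hasDerivAt_mul_neg_add_mul_exp_neg (k ν A C x : ℝ) :
    HasDerivAt (fun y => k * (-y + ν + A * (exp (-y) - C))) (k * (-1 - A * exp (-x))) x :=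
  ((((hasDerivAt_neg' x).add_const ν).add
    (((hasDerivAt_neg' x).exp.sub_const C).const_mul A)).const_mul k).congr_deriv (by ring)

theorem hasDerivAt_mul_add_mul_sub_exp (k ν A C x : ℝ) :
    HasDerivAt (fun y => k * (y - ν + A * (C - exp y))) (k * (1 - A * exp x)) x :=
  ((((hasDerivAt_id' x).sub_const ν).add
    (((hasDerivAt_exp x).const_sub C).const_mul A)).const_mul k).congr_deriv (by ring)

theorem stmt13_general (lam μ νs : ℝ) (hlam : 0 < lam) (hμ : μ ≠ 0)
    (r0 rinf A0 Ainf : ℝ)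
    (h0 : r0 = -1 / 2 + Real.sqrt (1 / 4 + 2 * lam / μ ^ 2))
    (hinf : rinf = 1 / 2 + Real.sqrt (1 / 4 + 2 * lam / μ ^ 2))
    (hA0 : A0 = (μ ^ 2 / (2 * lam)) * r0 - 1)
    (hAinf : Ainf = (μ ^ 2 / (2 * lam)) * rinf + 1)
    (g h : ℝ → ℝ)
    (hg : ∀ y, g y =
      if y < 0 then
        (2 / μ ^ 2) * (νs + A0 * (1 - Real.exp (-νs)))
          + (1 / lam) * (1 - Real.exp (r0 * y))
      else
        (2 / μ ^ 2) * (-y + νs + A0 * (Real.exp (-y) - Real.exp (-νs))))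
    (hhy : ∀ y, h y =
      if y < 0 then
        (2 / μ ^ 2) * (-νs + Ainf * (Real.exp νs - 1))
          + (1 / lam) * (1 - Real.exp (rinf * y))
      else
        (2 / μ ^ 2) * (y - νs + Ainf * (Real.exp νs - Real.exp y))) :
    ∀ y ≤ νs, Real.exp y * deriv g y = (r0 / rinf) * deriv h y := by
  intro y _
  obtain ⟨hr0, hprod⟩ :=
    neg_half_add_sqrt_pos_and_mul_add_one (c := 2 * lam / μ ^ 2) (by positivity) h0
  obtain rfl : rinf = r0 + 1 := by rw [h0, hinf]; ring
  have hlam' : lam = μ ^ 2 * (r0 * (r0 + 1)) / 2 := by rw [hprod]; field_simp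
  have hA0' : A0 = -r0 / (r0 + 1) := by rw [hA0, hlam']; field_simp; ring
  have hAinf' : Ainf = (r0 + 1) / r0 := by rw [hAinf, hlam']; field_simp; ring
  have dg : HasDerivAt g (if y < 0 then -(1 / lam * r0) * exp (r0 * y)
      else 2 / μ ^ 2 * (-1 - A0 * exp (-y))) y := by
    rw [funext hg]
    refine hasDerivAt_ite_lt_s13 (fun x => hasDerivAt_const_add_mul_one_sub_exp_mul _ _ _ x)
      (fun x => hasDerivAt_mul_neg_add_mul_exp_neg _ _ _ _ x) (by simp) ?_ y
    simp only [mul_zero, neg_zero, exp_zero, hA0', hlam']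
    field_simp
    ring
  have dh : HasDerivAt h (if y < 0 then -(1 / lam * (r0 + 1)) * exp ((r0 + 1) * y)
      else 2 / μ ^ 2 * (1 - Ainf * exp y)) y := by
    rw [funext hhy]
    refine hasDerivAt_ite_lt_s13 (fun x => hasDerivAt_const_add_mul_one_sub_exp_mul _ _ _ x)
      (fun x => hasDerivAt_mul_add_mul_sub_exp _ _ _ _ x) (by simp) ?_ y
    simp only [mul_zero, exp_zero, hAinf', hlam']
    field_simp
    ring
  rw [dg.deriv, dh.deriv, hA0', hAinf']
  split_ifs
  · rw [add_mul, exp_add]; field_simp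
  · rw [exp_neg]; field_simp; ring

/-- The key identity of Theorem 3: the post- and pre-change expected stopping
time functions `g` and `h` of ECUSUM with threshold `ν⋆` satisfy
`e^y g'(y) = (r₀/r_∞) h'(y)` for all `y ≤ ν⋆`. -/
theorem stmt13 (lam μ νs : ℝ) (hlam : 0 < lam) (hμ : μ ≠ 0) (hνs : 0 ≤ νs)
    (r0 rinf A0 Ainf : ℝ)
    (h0 : r0 = -1 / 2 + Real.sqrt (1 / 4 + 2 * lam / μ ^ 2))
    (hinf : rinf = 1 / 2 + Real.sqrt (1 / 4 + 2 * lam / μ ^ 2))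
    (hA0 : A0 = (μ ^ 2 / (2 * lam)) * r0 - 1)
    (hAinf : Ainf = (μ ^ 2 / (2 * lam)) * rinf + 1)
    (g h : ℝ → ℝ)
    (hg : ∀ y, g y =
      if y < 0 then
        (2 / μ ^ 2) * (νs + A0 * (1 - Real.exp (-νs)))
          + (1 / lam) * (1 - Real.exp (r0 * y))
      else
        (2 / μ ^ 2) * (-y + νs + A0 * (Real.exp (-y) - Real.exp (-νs))))
    (hhy : ∀ y, h y =
      if y < 0 then
        (2 / μ ^ 2) * (-νs + Ainf * (Real.exp νs - 1))
          + (1 / lam) * (1 - Real.exp (rinf * y))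
      else
        (2 / μ ^ 2) * (y - νs + Ainf * (Real.exp νs - Real.exp y))) :
    ∀ y ≤ νs, Real.exp y * deriv g y = (r0 / rinf) * deriv h y :=
  stmt13_general lam μ νs hlam hμ r0 rinf A0 Ainf h0 hinf hA0 hAinf g h hg hhy
end

section
/- With g_{ν⋆} and h_{ν⋆} as in the previous context, define p(y) = e^y g_{ν⋆}(y) − (r₀/r_∞) h_{ν⋆}(y) for y ∈ (−∞, ν⋆]. Then p'(y) = e^y g_{ν⋆}(y), p has a global maximum at y = ν⋆, p(ν⋆) = 0, and hence p(y) ≤ 0 for all y ≤ ν⋆. -/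
/-!
On each side of `0` the key function `p` is an explicit combination of exponentials, and the
two formulas agree at `0`, so `p` is differentiable everywhere. Differentiating
`e^y g(y) − (r₀/r_∞) h(y)` gives `e^y g(y) + e^y g'(y) − (r₀/r_∞) h'(y)`, and the last two
terms cancel: for `y < 0` because `r_∞ = r₀ + 1`, for `y ≥ 0` because `A₀ = 1/r_∞ − 1` and
`A_∞ = 1/r₀ + 1`, both of which say `μ² r₀ r_∞ = 2λ`. Since `A₀ ≥ −1`, `g ≥ 0` on `(−∞, ν⋆]`,
so `p` is nondecreasing there, and `g(ν⋆) = h(ν⋆) = 0` gives `p(ν⋆) = 0`.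
-/

open Real Set Filter

theorem hasDerivAt_of_eqOn_Iic_of_eqOn_Ici {f F G f' : ℝ → ℝ} {a x : ℝ}
    (hF : EqOn f F (Iic a)) (hG : EqOn f G (Ici a))
    (hF' : x ≤ a → HasDerivAt F (f' x) x) (hG' : a ≤ x → HasDerivAt G (f' x) x) :
    HasDerivAt f (f' x) x := by
  rcases lt_trichotomy x a with hx | rfl | hx
  · exact (hF' hx.le).congr_of_eventuallyEq (eventually_of_mem (Iic_mem_nhds hx) hF)
  · rw [← hasDerivWithinAt_univ, ← Iic_union_Ici]
    exact ((hF' le_rfl).hasDerivWithinAt.congr hF (hF self_mem_Iic)).union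
      ((hG' le_rfl).hasDerivWithinAt.congr hG (hG self_mem_Ici))
  · exact (hG' hx.le).congr_of_eventuallyEq (eventually_of_mem (Ici_mem_nhds hx) hG)

theorem ite_lt_eqOn_Iic {F G : ℝ → ℝ} {a : ℝ} (h : F a = G a) :
    EqOn (fun y => if y < a then F y else G y) F (Iic a) := by
  intro y hy
  rcases (mem_Iic.1 hy).lt_or_eq with hy | rfl
  · simp [hy]
  · simp [h]

theorem ite_lt_eqOn_Ici {F G : ℝ → ℝ} {a : ℝ} :
    EqOn (fun y => if y < a then F y else G y) G (Ici a) :=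
  fun _ hy => if_neg (not_lt.2 hy)

theorem HasDerivAt.exp_mul_sub_const_mul {G H : ℝ → ℝ} {g' h' k y : ℝ}
    (hG : HasDerivAt G g' y) (hH : HasDerivAt H h' y) (hk : Real.exp y * g' = k * h') :
    HasDerivAt (fun x => Real.exp x * G x - k * H x) (Real.exp y * G y) y :=
  (((hasDerivAt_exp y).mul hG).sub (hH.const_mul k)).congr_deriv (by linear_combination hk)

theorem exp_neg_sub_exp_neg_le {a b : ℝ} (ha : 0 ≤ a) (hab : a ≤ b) :
    exp (-a) - exp (-b) ≤ b - a := by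
  have hsplit : exp (-b) = exp (-a) * exp (a - b) := by rw [← exp_add]; ring_nf
  have hle : exp (-a) ≤ 1 := exp_le_one_iff.2 (by linarith)
  nlinarith [add_one_le_exp (a - b), exp_pos (-a)]

theorem neg_half_add_sqrt_pos {t : ℝ} (ht : 0 < t) : 0 < -1 / 2 + √(1 / 4 + t) := by
  have : √(1 / 4) < √(1 / 4 + t) := sqrt_lt_sqrt (by norm_num) (by linarith)
  rw [show (1 / 4 : ℝ) = (1 / 2) ^ 2 by norm_num, sqrt_sq (by norm_num)] at this
  linarith

theorem neg_half_add_sqrt_mul_half_add_sqrt {t : ℝ} (ht : 0 ≤ t) :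
    (-1 / 2 + √(1 / 4 + t)) * (1 / 2 + √(1 / 4 + t)) = t := by
  linear_combination sq_sqrt (by positivity : (0 : ℝ) ≤ 1 / 4 + t)

namespace ECUSUM

variable (lam μ νs r0 rinf A0 Ainf : ℝ)

/- `gPos`, `gNeg` (resp. `hPos`, `hNeg`) are the formulas for `g_ν` (resp. `h_ν`) on `y ≥ 0`
and on `y < 0`, taken on all of `ℝ`; `νs` is `ν⋆`, `rinf` is `r_∞`, `lam` is `λ`. -/

noncomputable def gPos (y : ℝ) : ℝ := 2 / μ ^ 2 * (-y + νs + A0 * (exp (-y) - exp (-νs)))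

noncomputable def gNeg (y : ℝ) : ℝ :=
  2 / μ ^ 2 * (νs + A0 * (1 - exp (-νs))) + 1 / lam * (1 - exp (r0 * y))

noncomputable def hPos (y : ℝ) : ℝ := 2 / μ ^ 2 * (y - νs + Ainf * (exp νs - exp y))

noncomputable def hNeg (y : ℝ) : ℝ :=
  2 / μ ^ 2 * (-νs + Ainf * (exp νs - 1)) + 1 / lam * (1 - exp (rinf * y))

noncomputable def g (y : ℝ) : ℝ := if y < 0 then gNeg lam μ νs r0 A0 y else gPos μ νs A0 y

noncomputable def h (y : ℝ) : ℝ :=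
  if y < 0 then hNeg lam μ νs rinf Ainf y else hPos μ νs Ainf y

noncomputable def p (y : ℝ) : ℝ :=
  exp y * g lam μ νs r0 A0 y - r0 / rinf * h lam μ νs rinf Ainf y

variable {lam μ νs r0 rinf A0 Ainf}

theorem gNeg_zero : gNeg lam μ νs r0 A0 0 = gPos μ νs A0 0 := by
  simp [gNeg, gPos]

theorem hNeg_zero : hNeg lam μ νs rinf Ainf 0 = hPos μ νs Ainf 0 := by
  simp [hNeg, hPos]

theorem hasDerivAt_gPos (y : ℝ) :
    HasDerivAt (gPos μ νs A0) (-(2 / μ ^ 2) * (1 + A0 * exp (-y))) y :=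
  ((((hasDerivAt_id' y).fun_neg.add_const νs).fun_add
    (((hasDerivAt_id' y).fun_neg.exp.sub_const (exp (-νs))).const_mul A0)).const_mul
      (2 / μ ^ 2)).congr_deriv (by ring)

theorem hasDerivAt_hPos (y : ℝ) :
    HasDerivAt (hPos μ νs Ainf) (2 / μ ^ 2 * (1 - Ainf * exp y)) y :=
  ((((hasDerivAt_id' y).sub_const νs).fun_add
    (((hasDerivAt_exp y).const_sub (exp νs)).const_mul Ainf)).const_mul
      (2 / μ ^ 2)).congr_deriv (by ring)

theorem hasDerivAt_const_add_one_sub_exp (K c r y : ℝ) :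
    HasDerivAt (fun x => K + c * (1 - exp (r * x))) (-(c * r) * exp (r * y)) y :=
  ((((hasDerivAt_id' y).const_mul r).exp.const_sub 1).const_mul c).const_add K
    |>.congr_deriv (by ring)

theorem hasDerivAt_p (hr : rinf = r0 + 1) (hr0 : 0 < r0) (hA0 : A0 = 1 / rinf - 1)
    (hAinf : Ainf = 1 / r0 + 1) (y : ℝ) :
    HasDerivAt (p lam μ νs r0 rinf A0 Ainf) (exp y * g lam μ νs r0 A0 y) y := by
  have hr0' : r0 + 1 ≠ 0 := by positivity
  have hgNeg : EqOn (g lam μ νs r0 A0) (gNeg lam μ νs r0 A0) (Iic 0) :=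
    ite_lt_eqOn_Iic gNeg_zero
  have hhNeg : EqOn (h lam μ νs rinf Ainf) (hNeg lam μ νs rinf Ainf) (Iic 0) :=
    ite_lt_eqOn_Iic hNeg_zero
  have hgPos : EqOn (g lam μ νs r0 A0) (gPos μ νs A0) (Ici 0) := ite_lt_eqOn_Ici
  have hhPos : EqOn (h lam μ νs rinf Ainf) (hPos μ νs Ainf) (Ici 0) := ite_lt_eqOn_Ici
  refine hasDerivAt_of_eqOn_Iic_of_eqOn_Ici (a := 0)
    (f' := fun x => exp x * g lam μ νs r0 A0 x)
    (F := fun x => exp x * gNeg lam μ νs r0 A0 x - r0 / rinf * hNeg lam μ νs rinf Ainf x)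
    (G := fun x => exp x * gPos μ νs A0 x - r0 / rinf * hPos μ νs Ainf x)
    (fun x hx => by simp only [p, hgNeg hx, hhNeg hx])
    (fun x hx => by simp only [p, hgPos hx, hhPos hx])
    (fun hy => ?_) (fun hy => ?_)
  · rw [hgNeg hy]
    refine (hasDerivAt_const_add_one_sub_exp _ _ _ y).exp_mul_sub_const_mul
      (hasDerivAt_const_add_one_sub_exp _ _ _ y) ?_
    rw [hr, add_mul, one_mul, exp_add]
    field_simp
  · rw [hgPos hy]
    refine (hasDerivAt_gPos y).exp_mul_sub_const_mul (hasDerivAt_hPos y) ?_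
    have hexp : exp y * exp (-y) = 1 := by rw [← exp_add, add_neg_cancel, exp_zero]
    have hAinf_mul : r0 / (r0 + 1) * (1 / r0 + 1) = 1 := by field_simp; ring
    have hsum : 1 / (r0 + 1) + r0 / (r0 + 1) = 1 := by field_simp; ring
    rw [hA0, hAinf, hr]
    linear_combination (-(2 / μ ^ 2) * (1 / (r0 + 1) - 1)) * hexp
      + (2 / μ ^ 2 * exp y) * hAinf_mul - 2 / μ ^ 2 * hsum

theorem gPos_nonneg (hA0 : -1 ≤ A0) {y : ℝ} (hy : 0 ≤ y) (hyν : y ≤ νs) :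
    0 ≤ gPos μ νs A0 y := by
  have hΔ : 0 ≤ exp (-y) - exp (-νs) := sub_nonneg.2 (exp_le_exp.2 (neg_le_neg hyν))
  have hΔle := exp_neg_sub_exp_neg_le hy hyν
  exact mul_nonneg (by positivity) (by nlinarith)

theorem gNeg_nonneg (hlam : 0 ≤ lam) (hr0 : 0 ≤ r0) (hνs : 0 ≤ νs) (hA0 : -1 ≤ A0) {y : ℝ}
    (hy : y ≤ 0) : 0 ≤ gNeg lam μ νs r0 A0 y := by
  have hg0 : 0 ≤ gNeg lam μ νs r0 A0 0 := gNeg_zero ▸ gPos_nonneg hA0 le_rfl hνs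
  have hexp : exp (r0 * y) ≤ 1 := exp_le_one_iff.2 (mul_nonpos_of_nonneg_of_nonpos hr0 hy)
  simp only [gNeg, mul_zero, exp_zero, sub_self, add_zero] at hg0 ⊢
  exact add_nonneg hg0 (mul_nonneg (by positivity) (sub_nonneg.2 hexp))

theorem g_nonneg (hlam : 0 ≤ lam) (hr0 : 0 ≤ r0) (hνs : 0 ≤ νs) (hA0 : -1 ≤ A0) {y : ℝ}
    (hy : y ≤ νs) : 0 ≤ g lam μ νs r0 A0 y := by
  unfold g
  split_ifs with hy0
  · exact gNeg_nonneg hlam hr0 hνs hA0 hy0.le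
  · exact gPos_nonneg hA0 (not_lt.1 hy0) hy

theorem p_self (hνs : 0 ≤ νs) : p lam μ νs r0 rinf A0 Ainf νs = 0 := by
  simp [p, g, h, gPos, hPos, not_lt.2 hνs]

end ECUSUM

/-- Theorem 3 (key function): with `p(y) = e^y g(y) − (r₀/r_∞) h(y)` one has
`p'(y) = e^y g(y)`, `p` attains its global maximum on `(−∞, ν⋆]` at `y = ν⋆`,
`p(ν⋆) = 0`, and hence `p(y) ≤ 0` for all `y ≤ ν⋆`. -/
theorem stmt14 (lam μ νs : ℝ) (hlam : 0 < lam) (hμ : μ ≠ 0) (hνs : 0 ≤ νs)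
    (r0 rinf A0 Ainf : ℝ)
    (h0 : r0 = -1 / 2 + Real.sqrt (1 / 4 + 2 * lam / μ ^ 2))
    (hinf : rinf = 1 / 2 + Real.sqrt (1 / 4 + 2 * lam / μ ^ 2))
    (hA0 : A0 = (μ ^ 2 / (2 * lam)) * r0 - 1)
    (hAinf : Ainf = (μ ^ 2 / (2 * lam)) * rinf + 1)
    (g h p : ℝ → ℝ)
    (hg : ∀ y, g y =
      if y < 0 then
        (2 / μ ^ 2) * (νs + A0 * (1 - Real.exp (-νs)))
          + (1 / lam) * (1 - Real.exp (r0 * y))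
      else
        (2 / μ ^ 2) * (-y + νs + A0 * (Real.exp (-y) - Real.exp (-νs))))
    (hhy : ∀ y, h y =
      if y < 0 then
        (2 / μ ^ 2) * (-νs + Ainf * (Real.exp νs - 1))
          + (1 / lam) * (1 - Real.exp (rinf * y))
      else
        (2 / μ ^ 2) * (y - νs + Ainf * (Real.exp νs - Real.exp y)))
    (hp : ∀ y, p y = Real.exp y * g y - (r0 / rinf) * h y) :
    (∀ y ≤ νs, deriv p y = Real.exp y * g y) ∧
      (∀ y ≤ νs, p y ≤ p νs) ∧ p νs = 0 ∧ ∀ y ≤ νs, p y ≤ 0 := by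
  obtain rfl : g = ECUSUM.g lam μ νs r0 A0 := funext hg
  obtain rfl : h = ECUSUM.h lam μ νs rinf Ainf := funext hhy
  obtain rfl : p = ECUSUM.p lam μ νs r0 rinf A0 Ainf := funext hp
  have ht : 0 < 2 * lam / μ ^ 2 := by positivity
  have hr0 : 0 < r0 := h0 ▸ neg_half_add_sqrt_pos ht
  have hr : rinf = r0 + 1 := by rw [h0, hinf]; ring
  have hprod : r0 * rinf = 2 * lam / μ ^ 2 :=
    h0 ▸ hinf ▸ neg_half_add_sqrt_mul_half_add_sqrt ht.le
  have hκ : μ ^ 2 / (2 * lam) = 1 / (r0 * rinf) := by rw [hprod, one_div_div]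
  have hrinf : rinf ≠ 0 := by rw [hr]; positivity
  have hA0' : A0 = 1 / rinf - 1 := by rw [hA0, hκ]; field_simp
  have hAinf' : Ainf = 1 / r0 + 1 := by rw [hAinf, hκ]; field_simp
  have hA0_ge : -1 ≤ A0 := by
    have : 0 ≤ μ ^ 2 / (2 * lam) * r0 := by positivity
    linarith
  have hderiv := ECUSUM.hasDerivAt_p (lam := lam) (μ := μ) (νs := νs) hr hr0 hA0' hAinf'
  have hmono : MonotoneOn (ECUSUM.p lam μ νs r0 rinf A0 Ainf) (Iic νs) :=
    monotoneOn_of_hasDerivWithinAt_nonneg (convex_Iic νs)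
      (fun x _ => (hderiv x).continuousAt.continuousWithinAt)
      (fun x _ => (hderiv x).hasDerivWithinAt)
      fun x hx => mul_nonneg (exp_pos x).le
        (ECUSUM.g_nonneg hlam.le hr0.le hνs hA0_ge (interior_Iic (a := νs) ▸ hx).le)
  have hmax : ∀ y ≤ νs,
      ECUSUM.p lam μ νs r0 rinf A0 Ainf y ≤ ECUSUM.p lam μ νs r0 rinf A0 Ainf νs :=
    fun y hy => hmono hy self_mem_Iic hy
  exact ⟨fun y _ => (hderiv y).deriv, hmax, ECUSUM.p_self hνs,
    fun y hy => ECUSUM.p_self hνs ▸ hmax y hy⟩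
end

section
/- With g_ν(y) as in the previous contexts (post-change expected delay function for ECUSUM with threshold ν ≥ 0, parameters μ ≠ 0, λ > 0), g_ν is strictly decreasing on (−∞, ν], g_ν(ν) = 0, g_ν(y) > 0 for y < ν, and sup_{y ≤ ν} g_ν(y) = g_ν(0) + 1/λ attained in the limit y → −∞; in particular g_ν(y) ≤ 1/λ + g_ν(0) for all y, which is the continuous-time version of the bound E[S̃_ν | y₀ = y] ≤ 1/λ + E[S_ν]. -/
/-!
On `(-∞, 0]`, `g` is `g 0 + (1 - e^{r₀ y}) / λ`, strictly decreasing because `r₀ > 0`,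
and tending to `g 0 + 1/λ` as `y → -∞`. On `[0, ∞)` it is `(2/μ²)(-y + A₀ e^{-y})` up to a
constant, strictly decreasing because `A₀ + 1 = μ² r₀ / (2λ) > 0` and `e^{-a} - e^{-b} < b - a`
for `0 ≤ a < b`. The two pieces agree at `0`, so `g` is strictly decreasing on all of `ℝ`;
hence its supremum over `(-∞, ν]` is its limit at `-∞`, and `g ν = 0` gives positivity.
-/

open Real Set Filter Topology

theorem Antitone.isLUB_image_Iic_of_tendsto_atBot {α β : Type*} [TopologicalSpace α]
    [Preorder α] [OrderClosedTopology α] [Preorder β] [IsCodirectedOrder β] {f : β → α}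
    {L : α} (hf : Antitone f) (hL : Tendsto f atBot (𝓝 L)) (a : β) :
    IsLUB (f '' Iic a) L := by
  have : Nonempty β := ⟨a⟩
  constructor
  · rintro _ ⟨y, -, rfl⟩
    exact hf.ge_of_tendsto hL y
  · exact fun b hb =>
      _root_.le_of_tendsto hL ((eventually_le_atBot a).mono fun y hy => hb ⟨y, hy, rfl⟩)

theorem neg_half_add_sqrt_one_quarter_add_pos {c : ℝ} (hc : 0 < c) :
    0 < -1 / 2 + √(1 / 4 + c) := by
  have := (lt_sqrt (by norm_num : (0 : ℝ) ≤ 1 / 2)).2 (by linarith : (1 / 2 : ℝ) ^ 2 < 1 / 4 + c)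
  linarith

theorem strictAnti_const_add_mul_one_sub_exp {r d : ℝ} (hr : 0 < r) (hd : 0 < d) (c : ℝ) :
    StrictAnti fun y => c + d * (1 - exp (r * y)) := fun a b hab => by
  have : exp (r * a) < exp (r * b) := exp_lt_exp.2 (by nlinarith)
  simp only
  nlinarith

theorem tendsto_const_add_mul_one_sub_exp_atBot {r : ℝ} (hr : 0 < r) (c d : ℝ) :
    Tendsto (fun y => c + d * (1 - exp (r * y))) atBot (𝓝 (c + d)) := by
  have hexp : Tendsto (fun y => exp (r * y)) atBot (𝓝 0) :=
    tendsto_exp_atBot.comp (tendsto_id.const_mul_atBot hr)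
  simpa using (((tendsto_const_nhds (x := (1 : ℝ))).sub hexp).const_mul d).const_add c

theorem exp_neg_sub_exp_neg_lt {a b : ℝ} (ha : 0 ≤ a) (hab : a < b) :
    exp (-a) - exp (-b) < b - a := by
  have hsplit : exp (-b) = exp (-a) * exp (a - b) := by rw [← exp_add]; ring_nf
  have hlin : a - b + 1 < exp (a - b) := add_one_lt_exp (by linarith)
  have hle : exp (-a) ≤ 1 := exp_le_one_iff.2 (by linarith)
  nlinarith [exp_pos (-a)]

theorem strictAntiOn_mul_neg_add_mul_exp_neg {k A : ℝ} (hk : 0 < k) (hA : -1 ≤ A) (c : ℝ) :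
    StrictAntiOn (fun y => k * (-y + c + A * (exp (-y) - exp (-c)))) (Ici 0) :=
  fun a ha b _ hab => by
  have hgap := exp_neg_sub_exp_neg_lt ha hab
  have hdec : exp (-b) < exp (-a) := exp_lt_exp.2 (by linarith)
  exact mul_lt_mul_of_pos_left (by nlinarith) hk

/-- Lemma 3 (analytic version): the post-change expected delay function `g` of
ECUSUM is strictly decreasing on `(−∞, ν]` with `g(ν) = 0`, positive on
`(−∞, ν)`, its supremum over `(−∞, ν]` equals `g(0) + 1/λ` and is attained in
the limit `y → −∞`; in particular `g(y) ≤ 1/λ + g(0)` for all `y ≤ ν`. -/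
theorem stmt15 (lam μ ν : ℝ) (hlam : 0 < lam) (hμ : μ ≠ 0) (hν : 0 ≤ ν)
    (r0 A0 : ℝ)
    (h0 : r0 = -1 / 2 + Real.sqrt (1 / 4 + 2 * lam / μ ^ 2))
    (hA0 : A0 = (μ ^ 2 / (2 * lam)) * r0 - 1)
    (g : ℝ → ℝ)
    (hg : ∀ y, g y =
      if y < 0 then
        (2 / μ ^ 2) * (ν + A0 * (1 - Real.exp (-ν)))
          + (1 / lam) * (1 - Real.exp (r0 * y))
      else
        (2 / μ ^ 2) * (-y + ν + A0 * (Real.exp (-y) - Real.exp (-ν)))) :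
    StrictAntiOn g (Set.Iic ν) ∧ g ν = 0 ∧ (∀ y < ν, 0 < g y) ∧
      Filter.Tendsto g Filter.atBot (nhds (g 0 + 1 / lam)) ∧
      sSup (g '' Set.Iic ν) = g 0 + 1 / lam ∧
      ∀ y ≤ ν, g y ≤ 1 / lam + g 0 := by
  have hr0 : 0 < r0 := h0 ▸ neg_half_add_sqrt_one_quarter_add_pos (by positivity)
  have hA0_ge : -1 ≤ A0 := by
    have : 0 ≤ μ ^ 2 / (2 * lam) * r0 := by positivity
    linarith
  have hg_Iic : EqOn (fun y => g 0 + 1 / lam * (1 - exp (r0 * y))) g (Iic 0) := by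
    intro y hy
    rcases (mem_Iic.1 hy).lt_or_eq with hy | rfl
    · simp [hg y, hg 0, hy]
    · simp
  have hg_Ici : EqOn (fun y => 2 / μ ^ 2 * (-y + ν + A0 * (exp (-y) - exp (-ν)))) g (Ici 0) :=
    fun y hy => by simp [hg y, not_lt.2 (mem_Ici.1 hy)]
  have hanti_Iic : StrictAntiOn g (Iic 0) :=
    ((strictAnti_const_add_mul_one_sub_exp hr0 (by positivity) _).strictAntiOn _).congr hg_Iic
  have hanti_Ici : StrictAntiOn g (Ici 0) :=
    (strictAntiOn_mul_neg_add_mul_exp_neg (by positivity) hA0_ge ν).congr hg_Ici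
  have hanti : StrictAnti g := hanti_Iic.Iic_union_Ici hanti_Ici
  have htend : Tendsto g atBot (𝓝 (g 0 + 1 / lam)) :=
    (tendsto_const_add_mul_one_sub_exp_atBot hr0 _ _).congr'
      (hg_Iic.eventuallyEq_of_mem (Iic_mem_atBot 0))
  have hgν : g ν = 0 := by simp [hg ν, not_lt.2 hν]
  have hlub := hanti.antitone.isLUB_image_Iic_of_tendsto_atBot htend ν
  refine ⟨hanti.strictAntiOn _, hgν, fun y hy => hgν ▸ hanti hy, htend,
    hlub.csSup_eq (nonempty_Iic.image g), fun y hy => ?_⟩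
  rw [add_comm]
  exact hlub.1 ⟨y, hy, rfl⟩
end
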